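/- Let ℓ>0, T>0, let 0=T₀<T₁<⋯<T_n=T be a finite partition of [0,T] and let v₀,…,v_{n−1}∈ℝ; set v(s)=v_i for s∈[T_i,T_{i+1}). Given x₀, x̃₀∈[0,ℓ], define x recursively by x(T₀)=x₀ and x(t)=max(0, min(ℓ, x(T_i) + v_i·(t−T_i))) for t∈[T_i,T_{i+1}], and define x̃ in the same way from x̃₀ with the same partition and the same v_i. If there exist t₁≤t₂≤T such that | ∫_{t₁}^{t₂} v(s) ds | ≥ ℓ, then there exists t≤T with x(t) = x̃(t). -/

import Mathlib

/-!
Clipping is monotone, so two clipped flows driven by the same velocity stay ordered, say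
`x ≤ x'`. Below the ceiling `ℓ` a clipped flow gains at least the integrated velocity: upward
motion is not clipped at all, downward motion is only slowed down by the floor. So if
`∫ v ≥ ℓ` on `[t₁, t₂]`, the lower flow `x` reaches `ℓ ≥ x'` there and meets `x'`. If
`∫ v ≤ -ℓ`, the same argument for the reflected flow `ℓ - x'` (velocity `-v`) shows that `x'`
reaches `0 ≤ x`.
-/

/-- Clipping to the interval `[0, ℓ]`. -/
noncomputable def clip (ℓ x : ℝ) : ℝ := max 0 (min ℓ x)

open Set MeasureTheory

section Clip

variable {ℓ y z : ℝ}

theorem clip_nonneg (ℓ y : ℝ) : 0 ≤ clip ℓ y := le_max_left _ _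

theorem clip_le (hℓ : 0 ≤ ℓ) (y : ℝ) : clip ℓ y ≤ ℓ := max_le hℓ (min_le_left _ _)

theorem clip_mono : Monotone (clip ℓ) := fun _ _ h => max_le_max le_rfl (min_le_min le_rfl h)

theorem clip_eq_self (h0 : 0 ≤ y) (hℓ : y ≤ ℓ) : clip ℓ y = y := by
  rw [clip, min_eq_right hℓ, max_eq_right h0]

theorem lt_of_clip_lt (h : clip ℓ y < ℓ) : y < ℓ := by
  by_contra! hy
  exact h.not_ge (by rw [clip, min_eq_left hy]; exact le_max_right _ _)

theorem clip_le_clip_add_sub (h : y ≤ z) : clip ℓ z ≤ clip ℓ y + (z - y) := by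
  simp only [clip, max_def, min_def]
  split_ifs <;> linarith

theorem clip_sub (hℓ : 0 ≤ ℓ) (y : ℝ) : clip ℓ (ℓ - y) = ℓ - clip ℓ y := by
  simp only [clip, max_def, min_def]
  split_ifs <;> linarith

theorem clip_add_mul_le_of_lt {y w s t : ℝ} (hy : 0 ≤ y) (hs : 0 ≤ s) (hst : s ≤ t)
    (ht : clip ℓ (y + w * t) < ℓ) :
    clip ℓ (y + w * s) + w * (t - s) ≤ clip ℓ (y + w * t) := by
  rcases le_total 0 w with hw | hw
  · have hys : 0 ≤ y + w * s := by positivity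
    have hst' : y + w * s ≤ y + w * t := by gcongr
    have hyt : y + w * t < ℓ := lt_of_clip_lt ht
    rw [clip_eq_self hys (hst'.trans hyt.le), clip_eq_self (hys.trans hst') hyt.le]
    linarith
  · have := clip_le_clip_add_sub (ℓ := ℓ)
      (show y + w * t ≤ y + w * s from by nlinarith)
    linarith

end Clip

theorem forall_mem_Icc_of_forall_pieces {α : Type*} [LinearOrder α] {n : ℕ} {Tt : ℕ → α}
    (hTt : MonotoneOn Tt (Iic n)) {P : α → Prop} (h0 : P (Tt 0))
    (hstep : ∀ i < n, P (Tt i) → ∀ t ∈ Icc (Tt i) (Tt (i + 1)), P t) :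
    ∀ t ∈ Icc (Tt 0) (Tt n), P t := by
  induction n with
  | zero => exact fun t ht => le_antisymm ht.2 ht.1 ▸ h0
  | succ k ih =>
    have ih := ih (hTt.mono (Iic_subset_Iic.2 k.le_succ)) fun i hi => hstep i (by omega)
    intro t ht
    rcases le_total t (Tt k) with htk | htk
    · exact ih t ⟨ht.1, htk⟩
    · have hk : Tt 0 ≤ Tt k := hTt (mem_Iic.2 (Nat.zero_le _)) (mem_Iic.2 k.le_succ) k.zero_le
      exact hstep k k.lt_succ_self (ih (Tt k) ⟨hk, le_rfl⟩) t ⟨htk, ht.2⟩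

section PiecewiseConstant

variable {f : ℝ → ℝ} {a b c : ℝ}

theorem intervalIntegrable_of_eqOn_Ioo (hab : a ≤ b) (h : EqOn f (fun _ => c) (Ioo a b)) :
    IntervalIntegrable f volume a b :=
  intervalIntegrable_const.congr_uIoo (uIoo_of_le hab ▸ h.symm)

theorem integral_of_eqOn_Ioo (hab : a ≤ b) (h : EqOn f (fun _ => c) (Ioo a b)) :
    ∫ s in a..b, f s = c * (b - a) := by
  rw [intervalIntegral.integral_congr_Ioo_of_le hab h, intervalIntegral.integral_const,
    smul_eq_mul, mul_comm]

variable {n : ℕ} {Tt v : ℕ → ℝ}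

theorem eqOn_Ioo_of_piecewise (hvfun : ∀ i < n, ∀ s ∈ Ico (Tt i) (Tt (i + 1)), f s = v i)
    {i : ℕ} (hi : i < n) (ha : Tt i ≤ a) (hb : b ≤ Tt (i + 1)) :
    EqOn f (fun _ => v i) (Ioo a b) :=
  fun s hs => hvfun i hi s ⟨ha.trans hs.1.le, hs.2.trans_le hb⟩

theorem intervalIntegrable_of_piecewise (hTt : MonotoneOn Tt (Iic n))
    (hvfun : ∀ i < n, ∀ s ∈ Ico (Tt i) (Tt (i + 1)), f s = v i)
    (ha : a ∈ Icc (Tt 0) (Tt n)) (hb : b ∈ Icc (Tt 0) (Tt n)) :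
    IntervalIntegrable f volume a b := by
  have : IntervalIntegrable f volume (Tt 0) (Tt n) :=
    IntervalIntegrable.trans_iterate fun i hi =>
      have hle : Tt i ≤ Tt (i + 1) := hTt (mem_Iic.2 hi.le) (mem_Iic.2 hi) i.le_succ
      intervalIntegrable_of_eqOn_Ioo hle (eqOn_Ioo_of_piecewise hvfun hi le_rfl le_rfl)
  refine this.mono_set ?_
  rw [uIcc_of_le (ha.1.trans ha.2)]
  exact uIcc_subset_Icc ha hb

end PiecewiseConstant

def IsClippedFlow (ℓ : ℝ) (n : ℕ) (Tt v : ℕ → ℝ) (x : ℝ → ℝ) : Prop :=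
  ∀ i < n, ∀ t ∈ Icc (Tt i) (Tt (i + 1)), x t = clip ℓ (x (Tt i) + v i * (t - Tt i))

namespace IsClippedFlow

variable {ℓ : ℝ} {n : ℕ} {Tt v : ℕ → ℝ} {x x' : ℝ → ℝ}

theorem mem_Icc (hℓ : 0 ≤ ℓ) (hx : IsClippedFlow ℓ n Tt v x) (hTt : MonotoneOn Tt (Iic n))
    (h0 : x (Tt 0) ∈ Icc 0 ℓ) : ∀ t ∈ Icc (Tt 0) (Tt n), x t ∈ Icc 0 ℓ :=
  forall_mem_Icc_of_forall_pieces hTt h0 fun i hi _ t ht =>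
    hx i hi t ht ▸ ⟨clip_nonneg _ _, clip_le hℓ _⟩

theorem le_of_le (hx : IsClippedFlow ℓ n Tt v x) (hx' : IsClippedFlow ℓ n Tt v x')
    (hTt : MonotoneOn Tt (Iic n)) (h0 : x (Tt 0) ≤ x' (Tt 0)) :
    ∀ t ∈ Icc (Tt 0) (Tt n), x t ≤ x' t :=
  forall_mem_Icc_of_forall_pieces hTt h0 fun i hi hle t ht => by
    rw [hx i hi t ht, hx' i hi t ht]
    exact clip_mono (by linarith)

theorem reflect (hℓ : 0 ≤ ℓ) (hx : IsClippedFlow ℓ n Tt v x) :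
    IsClippedFlow ℓ n Tt (-v) (fun t => ℓ - x t) := fun i hi t ht => by
  change ℓ - x t = clip ℓ (ℓ - x (Tt i) + -v i * (t - Tt i))
  rw [hx i hi t ht, ← clip_sub hℓ]
  ring_nf

theorem add_mul_le (hx : IsClippedFlow ℓ n Tt v x) {i : ℕ} (hi : i < n) {a b : ℝ}
    (ha : Tt i ≤ a) (hab : a ≤ b) (hb : b ≤ Tt (i + 1)) (hxb : x b < ℓ) :
    x a + v i * (b - a) ≤ x b := by
  have hxa := hx i hi a ⟨ha, hab.trans hb⟩
  have hxb' := hx i hi b ⟨ha.trans hab, hb⟩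
  have h0 : 0 ≤ x (Tt i) := hx i hi (Tt i) ⟨le_rfl, ha.trans (hab.trans hb)⟩ ▸ clip_nonneg _ _
  rw [hxb'] at hxb ⊢
  rw [hxa]
  have := clip_add_mul_le_of_lt h0 (sub_nonneg.2 ha) (sub_le_sub_right hab _) hxb
  rwa [sub_sub_sub_cancel_right] at this

variable {vfun : ℝ → ℝ} {t₁ t₂ : ℝ}

theorem add_integral_le (hx : IsClippedFlow ℓ n Tt v x) (hTt : MonotoneOn Tt (Iic n))
    (hvfun : ∀ i < n, ∀ s ∈ Ico (Tt i) (Tt (i + 1)), vfun s = v i)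
    {a : ℝ} (ha : a ∈ Icc (Tt 0) (Tt n)) :
    ∀ b ∈ Icc (Tt 0) (Tt n), a ≤ b → (∀ t ∈ Icc a b, x t < ℓ) →
      x a + ∫ s in a..b, vfun s ≤ x b := by
  refine forall_mem_Icc_of_forall_pieces hTt ?_ fun i hi ih b hb hab hlt => ?_
  · intro ha0 _
    rw [le_antisymm ha0 ha.1, intervalIntegral.integral_same, add_zero]
  have hxb := hlt b ⟨hab, le_rfl⟩
  rcases le_total a (Tt i) with hai | hia
  · have hTi : Tt i ∈ Icc (Tt 0) (Tt n) :=
      ⟨ha.1.trans hai, hTt (mem_Iic.2 hi.le) (mem_Iic.2 le_rfl) hi.le⟩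
    have hconst := eqOn_Ioo_of_piecewise hvfun hi le_rfl hb.2
    rw [← intervalIntegral.integral_add_adjacent_intervals
      (intervalIntegrable_of_piecewise hTt hvfun ha hTi)
      (intervalIntegrable_of_eqOn_Ioo hb.1 hconst), integral_of_eqOn_Ioo hb.1 hconst]
    have := ih hai fun t ht => hlt t ⟨ht.1, ht.2.trans hb.1⟩
    have := hx.add_mul_le hi le_rfl hb.1 hb.2 hxb
    linarith
  · rw [integral_of_eqOn_Ioo hab (eqOn_Ioo_of_piecewise hvfun hi hia hb.2)]
    exact hx.add_mul_le hi hia hab hb.2 hxb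

theorem exists_le_of_le_integral (hx : IsClippedFlow ℓ n Tt v x) (hTt : MonotoneOn Tt (Iic n))
    (hvfun : ∀ i < n, ∀ s ∈ Ico (Tt i) (Tt (i + 1)), vfun s = v i)
    (ht₁ : Tt 0 ≤ t₁) (h₁₂ : t₁ ≤ t₂) (ht₂ : t₂ ≤ Tt n) (h0 : 0 ≤ x t₁)
    (hbig : ℓ ≤ ∫ s in t₁..t₂, vfun s) : ∃ t ∈ Icc t₁ t₂, ℓ ≤ x t := by
  by_contra! hlt
  have := hx.add_integral_le hTt hvfun ⟨ht₁, h₁₂.trans ht₂⟩ t₂ ⟨ht₁.trans h₁₂, ht₂⟩ h₁₂ hlt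
  linarith [hlt t₂ ⟨h₁₂, le_rfl⟩]

theorem exists_nonpos_of_integral_le (hℓ : 0 ≤ ℓ) (hx : IsClippedFlow ℓ n Tt v x)
    (hTt : MonotoneOn Tt (Iic n))
    (hvfun : ∀ i < n, ∀ s ∈ Ico (Tt i) (Tt (i + 1)), vfun s = v i)
    (ht₁ : Tt 0 ≤ t₁) (h₁₂ : t₁ ≤ t₂) (ht₂ : t₂ ≤ Tt n) (hℓ₁ : x t₁ ≤ ℓ)
    (hbig : ∫ s in t₁..t₂, vfun s ≤ -ℓ) : ∃ t ∈ Icc t₁ t₂, x t ≤ 0 := by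
  have hvfun' : ∀ i < n, ∀ s ∈ Ico (Tt i) (Tt (i + 1)), -vfun s = (-v) i := fun i hi s hs => by
    rw [hvfun i hi s hs, Pi.neg_apply]
  obtain ⟨t, ht, hxt⟩ := (hx.reflect hℓ).exists_le_of_le_integral hTt hvfun' ht₁ h₁₂ ht₂
    (sub_nonneg.2 hℓ₁) (by rw [intervalIntegral.integral_neg]; linarith)
  exact ⟨t, ht, by linarith⟩

theorem exists_eq_of_le (hℓ : 0 ≤ ℓ) (hx : IsClippedFlow ℓ n Tt v x)
    (hx' : IsClippedFlow ℓ n Tt v x') (hTt : MonotoneOn Tt (Iic n))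
    (hvfun : ∀ i < n, ∀ s ∈ Ico (Tt i) (Tt (i + 1)), vfun s = v i)
    (hle : x (Tt 0) ≤ x' (Tt 0)) (hx0 : x (Tt 0) ∈ Icc 0 ℓ) (hx'0 : x' (Tt 0) ∈ Icc 0 ℓ)
    (ht₁ : Tt 0 ≤ t₁) (h₁₂ : t₁ ≤ t₂) (ht₂ : t₂ ≤ Tt n)
    (hbig : ℓ ≤ |∫ s in t₁..t₂, vfun s|) : ∃ t ∈ Icc t₁ t₂, x t = x' t := by
  have hsub : Icc t₁ t₂ ⊆ Icc (Tt 0) (Tt n) := Icc_subset_Icc ht₁ ht₂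
  have hxx' := hx.le_of_le hx' hTt hle
  have hxI := hx.mem_Icc hℓ hTt hx0
  have hx'I := hx'.mem_Icc hℓ hTt hx'0
  have ht₁I : t₁ ∈ Icc t₁ t₂ := ⟨le_rfl, h₁₂⟩
  rcases le_abs.1 hbig with hpos | hneg
  · obtain ⟨t, ht, hxt⟩ :=
      hx.exists_le_of_le_integral hTt hvfun ht₁ h₁₂ ht₂ (hxI t₁ (hsub ht₁I)).1 hpos
    exact ⟨t, ht, le_antisymm (hxx' t (hsub ht)) ((hx'I t (hsub ht)).2.trans hxt)⟩
  · obtain ⟨t, ht, hxt⟩ := hx'.exists_nonpos_of_integral_le hℓ hTt hvfun ht₁ h₁₂ ht₂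
      (hx'I t₁ (hsub ht₁I)).2 (by linarith)
    exact ⟨t, ht, le_antisymm (hxx' t (hsub ht)) (hxt.trans (hxI t (hsub ht)).1)⟩

end IsClippedFlow

theorem clipped_flows_meet_of_large_velocity_variation_general
    (ℓ T : ℝ) (hℓ : 0 < ℓ)
    (n : ℕ) (Tt : ℕ → ℝ) (hT0 : Tt 0 = 0) (hTn : Tt n = T)
    (hmono : ∀ i, i < n → Tt i < Tt (i + 1))
    (v : ℕ → ℝ) (vfun : ℝ → ℝ)
    (hvfun : ∀ i, i < n → ∀ s ∈ Set.Ico (Tt i) (Tt (i + 1)), vfun s = v i)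
    (x₀ x'₀ : ℝ) (hx₀ : x₀ ∈ Set.Icc 0 ℓ) (hx'₀ : x'₀ ∈ Set.Icc 0 ℓ)
    (x x' : ℝ → ℝ)
    (hx0 : x (Tt 0) = x₀) (hx'0 : x' (Tt 0) = x'₀)
    (hx : ∀ i, i < n → ∀ t ∈ Set.Icc (Tt i) (Tt (i + 1)),
      x t = clip ℓ (x (Tt i) + v i * (t - Tt i)))
    (hx' : ∀ i, i < n → ∀ t ∈ Set.Icc (Tt i) (Tt (i + 1)),
      x' t = clip ℓ (x' (Tt i) + v i * (t - Tt i)))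
    (t₁ t₂ : ℝ) (ht₁ : 0 ≤ t₁) (h₁₂ : t₁ ≤ t₂) (h₂T : t₂ ≤ T)
    (hbig : ℓ ≤ |∫ s in t₁..t₂, vfun s|) :
    ∃ t, 0 ≤ t ∧ t ≤ T ∧ x t = x' t := by
  have hTt : MonotoneOn Tt (Iic n) := (strictMonoOn_Iic_of_lt_succ hmono).monotoneOn
  subst hx0 hx'0 hTn
  rw [← hT0] at ht₁
  suffices ∃ t ∈ Icc t₁ t₂, x t = x' t by
    obtain ⟨t, ht, hxt⟩ := this
    exact ⟨t, hT0 ▸ ht₁.trans ht.1, ht.2.trans h₂T, hxt⟩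
  rcases le_total (x (Tt 0)) (x' (Tt 0)) with hle | hle
  · exact IsClippedFlow.exists_eq_of_le hℓ.le hx hx' hTt hvfun hle hx₀ hx'₀ ht₁ h₁₂ h₂T hbig
  · obtain ⟨t, ht, hxt⟩ :=
      IsClippedFlow.exists_eq_of_le hℓ.le hx' hx hTt hvfun hle hx'₀ hx₀ ht₁ h₁₂ h₂T hbig
    exact ⟨t, ht, hxt.symm⟩

/-- **Deterministic coupling lemma.** Two trajectories confined to `[0, ℓ]` by clipping and
driven by the same piecewise constant velocity must meet by time `T` as soon as the
integrated velocity has a variation of size at least `ℓ` on some subinterval of `[0, T]`. -/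
theorem clipped_flows_meet_of_large_velocity_variation
    (ℓ T : ℝ) (hℓ : 0 < ℓ) (hT : 0 < T)
    (n : ℕ) (Tt : ℕ → ℝ) (hT0 : Tt 0 = 0) (hTn : Tt n = T)
    (hmono : ∀ i, i < n → Tt i < Tt (i + 1))
    (v : ℕ → ℝ) (vfun : ℝ → ℝ)
    (hvfun : ∀ i, i < n → ∀ s ∈ Set.Ico (Tt i) (Tt (i + 1)), vfun s = v i)
    (x₀ x'₀ : ℝ) (hx₀ : x₀ ∈ Set.Icc 0 ℓ) (hx'₀ : x'₀ ∈ Set.Icc 0 ℓ)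
    (x x' : ℝ → ℝ)
    (hx0 : x (Tt 0) = x₀) (hx'0 : x' (Tt 0) = x'₀)
    (hx : ∀ i, i < n → ∀ t ∈ Set.Icc (Tt i) (Tt (i + 1)),
      x t = clip ℓ (x (Tt i) + v i * (t - Tt i)))
    (hx' : ∀ i, i < n → ∀ t ∈ Set.Icc (Tt i) (Tt (i + 1)),
      x' t = clip ℓ (x' (Tt i) + v i * (t - Tt i)))
    (t₁ t₂ : ℝ) (ht₁ : 0 ≤ t₁) (h₁₂ : t₁ ≤ t₂) (h₂T : t₂ ≤ T)
    (hbig : ℓ ≤ |∫ s in t₁..t₂, vfun s|) :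
    ∃ t, 0 ≤ t ∧ t ≤ T ∧ x t = x' t :=
  clipped_flows_meet_of_large_velocity_variation_general ℓ T hℓ n Tt hT0 hTn hmono v vfun hvfun x₀
    x'₀ hx₀ hx'₀ x x' hx0 hx'0 hx hx' t₁ t₂ ht₁ h₁₂ h₂T hbig
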